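/- arXiv:math/0501085 — 8 statements merged into one kernel-verified Lean document; each statement's English description precedes it below -/
import Mathlib

section
/- Let (Z, Y, H, X) be a pre-wreath structure. Then for all h, k ∈ H and every A ∈ XH, if Ah = Ak (equality of image sets) then h and k agree pointwise on A. -/
/-- A pre-wreath structure `(Z, Y, H, X)`: `H` is a nontrivial subgroup of `Sym(Z)`,
`X ⊆ Y ⊆ Z`, `X` nonempty, every element of `H` fixes every point outside `Y`,
if `Xh` meets `X` then `h` is the identity on `X`, and every nontrivial `h ∈ H`
moves some set `Xj` (`j ∈ H`). (Images are written with Lean's left action, so the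
set `Xh` of the paper is `⇑h '' X`.) -/
def IsPreWreath {Z : Type*} (Y : Set Z) (H : Subgroup (Equiv.Perm Z)) (X : Set Z) : Prop :=
  H ≠ ⊥ ∧
  (∀ h ∈ H, ∀ z : Z, z ∉ Y → h z = z) ∧
  X ⊆ Y ∧
  X.Nonempty ∧
  (∀ h ∈ H, (⇑h '' X ∩ X).Nonempty → ∀ x ∈ X, h x = x) ∧
  (∀ h ∈ H, h ≠ 1 → ∃ j ∈ H, ⇑h '' (⇑j '' X) ≠ ⇑j '' X)

/-- The carrier `XH = {Xh : h ∈ H}` of a pre-wreath structure. -/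
def wreathCarrier {Z : Type*} (H : Subgroup (Equiv.Perm Z)) (X : Set Z) : Set (Set Z) :=
  {A : Set Z | ∃ h ∈ H, A = ⇑h '' X}

/-- The support of a subgroup of `Sym(Z)`: the points moved by some element. -/
def Supp {Z : Type*} (K : Subgroup (Equiv.Perm Z)) : Set Z :=
  {z : Z | ∃ g ∈ K, g z ≠ z}

/-- In a pre-wreath structure, if `h, k ∈ H` and `A` is a set of the
carrier with `Ah = Ak`, then `h` and `k` agree pointwise on `A`. -/
theorem stmt2 {Z : Type*} (Y : Set Z) (H : Subgroup (Equiv.Perm Z)) (X : Set Z)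
    (hpw : IsPreWreath Y H X) :
    ∀ h ∈ H, ∀ k ∈ H, ∀ A ∈ wreathCarrier H X,
      ⇑h '' A = ⇑k '' A → ∀ a ∈ A, h a = k a := by
  obtain ⟨-, -, -, hXne, hmeet, -⟩ := hpw
  intro h hH k kH A hA hEq a haA
  obtain ⟨j, jH, rfl⟩ := hA
  set m : Equiv.Perm Z := j⁻¹ * (k⁻¹ * h) * j with hm
  have mH : m ∈ H := by
    exact H.mul_mem (H.mul_mem (H.inv_mem jH) (H.mul_mem (H.inv_mem kH) hH)) jH
  have himg : ⇑m '' X = X := by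
    have : ∀ g g' : Equiv.Perm Z, ∀ S : Set Z, ⇑(g * g') '' S = ⇑g '' (⇑g' '' S) := by
      intro g g' S
      simp [Set.image_image]
    rw [hm, this, this, this, hEq, Set.image_image, Set.image_image]
    simp [Set.image_image]
  have hfix : ∀ x ∈ X, m x = x := by
    apply hmeet m mH
    rw [himg]
    simpa [Set.inter_self] using hXne
  obtain ⟨x, hxX, rfl⟩ := haA
  have := hfix x hxX
  have h2 : (k⁻¹ : Equiv.Perm Z) (h (j x)) = j x := by
    have : m x = x := this
    rw [hm] at this
    simpa [Equiv.Perm.mul_apply] using congrArg j this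
  calc h (j x) = k ((k⁻¹ : Equiv.Perm Z) (h (j x))) := by simp
    _ = k (j x) := by rw [h2]
end

section
/- If (Z, Y, H, X) is a pre-wreath structure and X' is a nonempty subset of X, then (Z, Y, H, X') is a pre-wreath structure. -/
/-! The conjugate `j⁻¹ h j` lies in `H`, so condition (ii) for `X` transfers to every translate
`j X`: an `h ∈ H` whose image of `j X` meets `j X` fixes `j X` pointwise. If `h` stabilises
`j X'`, its image of `j X` meets `j X` (as `X'` is nonempty), so `h` stabilises `j X` too; hence
a `j` witnessing (iii) for `X` also witnesses it for `X'`. Condition (ii) only gets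
weaker when `X` shrinks. -/

section

variable {Z : Type*} {H : Subgroup (Equiv.Perm Z)} {X : Set Z}

theorem fixes_translate_of_image_inter_nonempty
    (hmeet : ∀ h ∈ H, (⇑h '' X ∩ X).Nonempty → ∀ x ∈ X, h x = x)
    {h j : Equiv.Perm Z} (hh : h ∈ H) (hj : j ∈ H)
    (hne : (⇑h '' (⇑j '' X) ∩ ⇑j '' X).Nonempty) :
    ∀ y ∈ ⇑j '' X, h y = y := by
  have hconj : j⁻¹ * h * j ∈ H := H.mul_mem (H.mul_mem (H.inv_mem hj) hh) hj
  have hne' : (⇑(j⁻¹ * h * j) '' X ∩ X).Nonempty := by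
    obtain ⟨_, ⟨_, ⟨x, hx, rfl⟩, hhx⟩, ⟨x', hx', rfl⟩⟩ := hne
    refine ⟨x', ⟨x, hx, ?_⟩, hx'⟩
    simp [hhx]
  rintro _ ⟨x, hx, rfl⟩
  have hfix := hmeet _ hconj hne' x hx
  simpa using congrArg j hfix

theorem image_translate_eq_of_image_translate_subset_eq
    (hmeet : ∀ h ∈ H, (⇑h '' X ∩ X).Nonempty → ∀ x ∈ X, h x = x)
    {X' : Set Z} (hX' : X'.Nonempty) (hsub : X' ⊆ X)
    {h j : Equiv.Perm Z} (hh : h ∈ H) (hj : j ∈ H)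
    (hstab : ⇑h '' (⇑j '' X') = ⇑j '' X') :
    ⇑h '' (⇑j '' X) = ⇑j '' X := by
  obtain ⟨x, hx⟩ := hX'
  have hjx : j x ∈ ⇑h '' (⇑j '' X') := by
    rw [hstab]; exact Set.mem_image_of_mem j hx
  have hne : (⇑h '' (⇑j '' X) ∩ ⇑j '' X).Nonempty :=
    ⟨j x, Set.image_mono (Set.image_mono hsub) hjx, Set.mem_image_of_mem j (hsub hx)⟩
  exact Set.EqOn.image_eq_self (fixes_translate_of_image_inter_nonempty hmeet hh hj hne)

end

/-- If `(Z, Y, H, X)` is a pre-wreath structure and `X'` is a nonempty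
subset of `X`, then `(Z, Y, H, X')` is a pre-wreath structure. -/
theorem stmt4 {Z : Type*} (Y : Set Z) (H : Subgroup (Equiv.Perm Z)) (X X' : Set Z)
    (hpw : IsPreWreath Y H X) (hX' : X'.Nonempty) (hsub : X' ⊆ X) :
    IsPreWreath Y H X' := by
  obtain ⟨hnt, hfix, hXY, -, hmeet, hmove⟩ := hpw
  refine ⟨hnt, hfix, hsub.trans hXY, hX', fun h hh hne => ?_, fun h hh h1 => ?_⟩
  · exact fun x hx =>
      hmeet h hh (hne.mono (Set.inter_subset_inter (Set.image_mono hsub) hsub)) x (hsub hx)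
  · obtain ⟨j, hj, hmoved⟩ := hmove h hh h1
    exact ⟨j, hj, mt (image_translate_eq_of_image_translate_subset_eq hmeet hX' hsub hh hj) hmoved⟩
end

section
/- Let (Z, Y, H, X) and (Z, X, G, W) be pre-wreath structures (so W ⊆ X ⊆ Y ⊆ Z, every element of G fixes every point outside X, and every element of H fixes every point outside Y). Then (Z, Y, ⟨G, H⟩, W) is a pre-wreath structure, where ⟨G, H⟩ is the subgroup of Sym(Z) generated by G and H. -/
/-!
Every element of `⟨G, H⟩` factors as `k = h₀ n` with `h₀ ∈ H` and `n` in the base group: `n` fixes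
every point off the translates `Xh` (`h ∈ H`) and acts on each translate as a conjugate of an
element of `G`. Because the translates are blocks for `H` and `G` fixes pointwise every translate
other than `X`, this normal form is closed under products. Condition (ii) for `W` then follows
from (ii) for `H`, which forces `h₀` to be trivial on `X`, and (ii) for `G`. For (iii): if
`h₀ ≠ 1` it moves some block `Xj` off itself, and `Wj` with it; if `h₀ = 1`, then `n` moves a
point of some `Xj`, so acts there as some `g ≠ 1` in `G`, and `g` moves some `Wj₂ ⊆ X`.
-/

open Equiv

section PreWreath

variable {Z : Type*}

theorem Equiv.Perm.apply_mem_of_forall_notMem {g : Perm Z} {X : Set Z}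
    (hg : ∀ z ∉ X, g z = z) {x : Z} (hx : x ∈ X) : g x ∈ X := by
  by_contra h
  exact h (by rwa [g.injective (hg _ h)])

namespace IsPreWreath

variable {Y X : Set Z} {H : Subgroup (Perm Z)}

theorem ne_bot (hH : IsPreWreath Y H X) : H ≠ ⊥ := hH.1

theorem apply_eq_of_notMem (hH : IsPreWreath Y H X) {h : Perm Z} (hh : h ∈ H) :
    ∀ z ∉ Y, h z = z :=
  hH.2.1 h hh

theorem subset (hH : IsPreWreath Y H X) : X ⊆ Y := hH.2.2.1

theorem nonempty (hH : IsPreWreath Y H X) : X.Nonempty := hH.2.2.2.1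

theorem apply_eq_of_image_inter_nonempty (hH : IsPreWreath Y H X) {h : Perm Z} (hh : h ∈ H)
    (hX : (⇑h '' X ∩ X).Nonempty) : ∀ x ∈ X, h x = x :=
  hH.2.2.2.2.1 h hh hX

theorem exists_image_image_ne (hH : IsPreWreath Y H X) {h : Perm Z} (hh : h ∈ H) (h1 : h ≠ 1) :
    ∃ j ∈ H, ⇑h '' (⇑j '' X) ≠ ⇑j '' X :=
  hH.2.2.2.2.2 h hh h1

theorem apply_mem (hH : IsPreWreath Y H X) {h : Perm Z} (hh : h ∈ H) {y : Z} (hy : y ∈ Y) :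
    h y ∈ Y :=
  Perm.apply_mem_of_forall_notMem (hH.apply_eq_of_notMem hh) hy

theorem le_fixingSubgroup (hH : IsPreWreath Y H X) : H ≤ fixingSubgroup (Perm Z) Yᶜ :=
  fun _ hh => (mem_fixingSubgroup_iff (Perm Z)).2 (hH.apply_eq_of_notMem hh)

theorem image_image_eq_of_inter_nonempty (hH : IsPreWreath Y H X) {h j : Perm Z} (hh : h ∈ H)
    (hj : j ∈ H) (hne : (⇑h '' (⇑j '' X) ∩ ⇑j '' X).Nonempty) :
    ⇑h '' (⇑j '' X) = ⇑j '' X := by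
  obtain ⟨_, ⟨_, ⟨x, hx, rfl⟩, rfl⟩, y, hy, hyx⟩ := hne
  have hfix := hH.apply_eq_of_image_inter_nonempty (mul_mem (mul_mem (inv_mem hj) hh) hj)
    ⟨y, ⟨x, hx, by simp [← hyx]⟩, hy⟩
  rw [Set.image_image]
  refine Set.image_congr fun x hx => ?_
  have hjx := hfix x hx
  rw [Perm.mul_apply, Perm.mul_apply, Perm.inv_eq_iff_eq] at hjx
  exact hjx

end IsPreWreath

/-- `k = h₀ * n` with `h₀ ∈ H` and `n` in the base group: `n` fixes every point off the
translates `⇑h '' X` (`h ∈ H`) and acts on each of them as a conjugate `h * g * h⁻¹`, `g ∈ G`. -/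
def IsWreathPerm (H G : Subgroup (Perm Z)) (X : Set Z) (k : Perm Z) : Prop :=
  ∃ h₀ ∈ H, (∀ z, (∀ h ∈ H, ∀ x ∈ X, h x ≠ z) → k z = h₀ z) ∧
    ∀ h ∈ H, ∃ g ∈ G, ∀ x ∈ X, k (h x) = h₀ (h (g x))

section Decomposition

variable {H G : Subgroup (Perm Z)} {X : Set Z}

theorem isWreathPerm_of_mem_right {h : Perm Z} (hh : h ∈ H) : IsWreathPerm H G X h :=
  ⟨h, hh, fun _ _ => rfl, fun _ _ => ⟨1, G.one_mem, fun _ _ => rfl⟩⟩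

theorem isWreathPerm_of_mem_left (hGX : ∀ g ∈ G, ∀ z ∉ X, g z = z)
    (hHX : ∀ h ∈ H, (⇑h '' X ∩ X).Nonempty → ∀ x ∈ X, h x = x) {g : Perm Z} (hg : g ∈ G) :
    IsWreathPerm H G X g := by
  refine ⟨1, H.one_mem, fun z hz => hGX g hg z fun hzX => hz 1 H.one_mem z hzX rfl, fun h hh => ?_⟩
  by_cases hmeet : (⇑h '' X ∩ X).Nonempty
  · have hfix := hHX h hh hmeet
    refine ⟨g, hg, fun x hx => ?_⟩
    rw [hfix x hx, hfix _ (Perm.apply_mem_of_forall_notMem (hGX g hg) hx), Perm.one_apply]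
  · refine ⟨1, G.one_mem, fun x hx => ?_⟩
    have hhx : h x ∉ X := fun hhx => hmeet ⟨h x, ⟨x, hx, rfl⟩, hhx⟩
    rw [hGX g hg _ hhx, Perm.one_apply, Perm.one_apply]

theorem IsWreathPerm.mul (hGX : ∀ g ∈ G, ∀ z ∉ X, g z = z) {k₁ k₂ : Perm Z}
    (hk₁ : IsWreathPerm H G X k₁) (hk₂ : IsWreathPerm H G X k₂) :
    IsWreathPerm H G X (k₁ * k₂) := by
  obtain ⟨h₁, hh₁, hout₁, hloc₁⟩ := hk₁
  obtain ⟨h₂, hh₂, hout₂, hloc₂⟩ := hk₂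
  refine ⟨h₁ * h₂, mul_mem hh₁ hh₂, fun z hz => ?_, fun h hh => ?_⟩
  · have hz₂ : ∀ h ∈ H, ∀ x ∈ X, h x ≠ h₂ z := fun h hh x hx hxz =>
      hz (h₂⁻¹ * h) (mul_mem (inv_mem hh₂) hh) x hx (by simp [hxz])
    rw [Perm.mul_apply, hout₂ z hz, hout₁ _ hz₂, Perm.mul_apply]
  · obtain ⟨g₂, hg₂, hk₂⟩ := hloc₂ h hh
    obtain ⟨g₁, hg₁, hk₁⟩ := hloc₁ (h₂ * h) (mul_mem hh₂ hh)
    refine ⟨g₁ * g₂, mul_mem hg₁ hg₂, fun x hx => ?_⟩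
    have hg₂x := Perm.apply_mem_of_forall_notMem (hGX g₂ hg₂) hx
    simpa [hk₂ x hx] using hk₁ _ hg₂x

theorem isWreathPerm_of_mem_sup (hGX : ∀ g ∈ G, ∀ z ∉ X, g z = z)
    (hHX : ∀ h ∈ H, (⇑h '' X ∩ X).Nonempty → ∀ x ∈ X, h x = x) {k : Perm Z} (hk : k ∈ G ⊔ H) :
    IsWreathPerm H G X k := by
  have hgen : ∀ k ∈ (G : Set (Perm Z)) ∪ H, IsWreathPerm H G X k := by
    rintro k (hk | hk)
    exacts [isWreathPerm_of_mem_left hGX hHX hk, isWreathPerm_of_mem_right hk]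
  rw [Subgroup.sup_eq_closure] at hk
  induction hk using Subgroup.closure_induction'' with
  | mem k hk => exact hgen k hk
  | inv_mem k hk => exact hgen k⁻¹ (hk.imp (inv_mem ·) (inv_mem ·))
  | one => exact isWreathPerm_of_mem_right H.one_mem
  | mul k₁ k₂ _ _ hk₁ hk₂ => exact hk₁.mul hGX hk₂

end Decomposition

namespace IsWreathPerm

variable {Y X W : Set Z} {H G : Subgroup (Perm Z)} {k : Perm Z}

theorem apply_eq_of_image_inter_nonempty (hH : IsPreWreath Y H X) (hG : IsPreWreath X G W)
    (hk : IsWreathPerm H G X k) (hkW : (⇑k '' W ∩ W).Nonempty) : ∀ w ∈ W, k w = w := by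
  obtain ⟨h₀, hh₀, -, hloc⟩ := hk
  obtain ⟨g, hg, hkg⟩ := hloc 1 H.one_mem
  simp only [Perm.one_apply] at hkg
  obtain ⟨_, ⟨w₀, hw₀, rfl⟩, hkw₀⟩ := hkW
  have hh₀X := hH.apply_eq_of_image_inter_nonempty hh₀
    ⟨k w₀, ⟨g w₀, hG.apply_mem hg (hG.subset hw₀), (hkg _ (hG.subset hw₀)).symm⟩, hG.subset hkw₀⟩
  have hkX : ∀ x ∈ X, k x = g x := fun x hx => by rw [hkg x hx, hh₀X _ (hG.apply_mem hg hx)]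
  have hgW := hG.apply_eq_of_image_inter_nonempty hg
    ⟨k w₀, ⟨w₀, hw₀, (hkX _ (hG.subset hw₀)).symm⟩, hkw₀⟩
  exact fun w hw => (hkX w (hG.subset hw)).trans (hgW w hw)

theorem exists_image_image_ne (hH : IsPreWreath Y H X) (hG : IsPreWreath X G W)
    (hk : IsWreathPerm H G X k) (hk1 : k ≠ 1) : ∃ j ∈ G ⊔ H, ⇑k '' (⇑j '' W) ≠ ⇑j '' W := by
  obtain ⟨h₀, hh₀, hout, hloc⟩ := hk
  by_cases hh₀1 : h₀ = 1
  · subst hh₀1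
    obtain ⟨z, hz⟩ : ∃ z, k z ≠ z := by
      by_contra! hfix
      exact hk1 (Equiv.ext hfix)
    obtain ⟨j, hj, x, hx, rfl⟩ : ∃ j ∈ H, ∃ x ∈ X, j x = z := by
      by_contra! hzout
      exact hz (hout z hzout)
    obtain ⟨g, hg, hkj⟩ := hloc j hj
    have hg1 : g ≠ 1 := by
      rintro rfl
      exact hz (hkj x hx)
    obtain ⟨j₂, hj₂, hne⟩ := hG.exists_image_image_ne hg hg1
    refine ⟨j * j₂, mul_mem (Subgroup.mem_sup_right hj) (Subgroup.mem_sup_left hj₂),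
      fun heq => hne ?_⟩
    apply Set.image_injective.2 j.injective
    have hkjj₂ : ⇑k '' (⇑(j * j₂) '' W) = ⇑j '' (⇑g '' (⇑j₂ '' W)) := by
      simp only [Set.image_image, Perm.mul_apply]
      exact Set.image_congr fun w hw => hkj _ (hG.apply_mem hj₂ (hG.subset hw))
    rw [← hkjj₂, heq, Perm.coe_mul, Set.image_comp]
  · obtain ⟨j, hj, hne⟩ := hH.exists_image_image_ne hh₀ hh₀1
    refine ⟨j, Subgroup.mem_sup_right hj,
      fun heq => hne (hH.image_image_eq_of_inter_nonempty hh₀ hj ?_)⟩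
    obtain ⟨w, hw⟩ := hG.nonempty
    obtain ⟨g, hg, hkj⟩ := hloc j hj
    have hkjw : k (j w) ∈ ⇑j '' W := heq ▸ ⟨j w, ⟨w, hw, rfl⟩, rfl⟩
    refine ⟨k (j w), ?_, Set.image_mono hG.subset hkjw⟩
    rw [hkj w (hG.subset hw)]
    exact ⟨_, ⟨g w, hG.apply_mem hg (hG.subset hw), rfl⟩, rfl⟩

end IsWreathPerm

end PreWreath

/-- If `(Z, Y, H, X)` and `(Z, X, G, W)` are pre-wreath structures,
then `(Z, Y, ⟨G, H⟩, W)` is a pre-wreath structure, where `⟨G, H⟩ = G ⊔ H` is the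
subgroup of `Sym(Z)` generated by `G` and `H`. -/
theorem stmt5 {Z : Type*} (Y X W : Set Z) (H G : Subgroup (Equiv.Perm Z))
    (hH : IsPreWreath Y H X) (hG : IsPreWreath X G W) :
    IsPreWreath Y (G ⊔ H) W := by
  have hfix : G ⊔ H ≤ fixingSubgroup (Perm Z) Yᶜ :=
    sup_le (hG.le_fixingSubgroup.trans
      (fixingSubgroup_antitone _ _ (Set.compl_subset_compl.2 hH.subset))) hH.le_fixingSubgroup
  have hwreath : ∀ k ∈ G ⊔ H, IsWreathPerm H G X k := fun k =>
    isWreathPerm_of_mem_sup (fun g hg => hG.apply_eq_of_notMem hg)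
      (fun h hh => hH.apply_eq_of_image_inter_nonempty hh)
  refine ⟨ne_bot_of_le_ne_bot hG.ne_bot le_sup_left,
    fun k hk => (mem_fixingSubgroup_iff (Perm Z)).1 (hfix hk), hG.subset.trans hH.subset,
    hG.nonempty, fun k hk => (hwreath k hk).apply_eq_of_image_inter_nonempty hH hG,
    fun k hk => (hwreath k hk).exists_image_image_ne hH hG⟩
end

section
/- Let (Z, Y, H, X) and (Z, X, G, W) be pre-wreath structures. Then the carrier of the pre-wreath structure (Z, Y, ⟨G, H⟩, W) equals WGH = {Wgh : g ∈ G, h ∈ H}; that is, the family of image sets {Ww : w ∈ ⟨G, H⟩} coincides with the family of sets obtained from W by first applying an element g of G and then an element h of H. -/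
/-- If `(Z, Y, H, X)` and `(Z, X, G, W)` are pre-wreath structures,
then the carrier of the pre-wreath structure `(Z, Y, ⟨G, H⟩, W)` equals
`WGH = {Wgh : g ∈ G, h ∈ H}` (apply `g` first, then `h`). -/
theorem stmt6 {Z : Type*} (Y X W : Set Z) (H G : Subgroup (Equiv.Perm Z))
    (hH : IsPreWreath Y H X) (hG : IsPreWreath X G W) :
    wreathCarrier (G ⊔ H) W
      = {A : Set Z | ∃ g ∈ G, ∃ h ∈ H, A = ⇑h '' (⇑g '' W)} := by
  obtain ⟨-, hGfix, hWX, -, -, -⟩ := hG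
  obtain ⟨-, -, -, -, hHid, -⟩ := hH
  -- G maps X into X
  have hGXX : ∀ g ∈ G, ∀ x ∈ X, g x ∈ X := by
    intro g hg x hx
    by_contra hgx
    have h1 := hGfix g hg _ hgx
    exact hgx (by rw [g.injective h1]; exact hx)
  set S : Set (Set Z) := {A : Set Z | ∃ g ∈ G, ∃ h ∈ H, A = ⇑h '' (⇑g '' W)} with hS
  -- generators preserve S
  have key : ∀ k, k ∈ (G : Set (Equiv.Perm Z)) ∪ (H : Set (Equiv.Perm Z)) →
      ∀ A ∈ S, ⇑k '' A ∈ S := by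
    rintro k hk A ⟨g, hg, h, hh, rfl⟩
    rcases hk with hkG | hkH
    · -- k ∈ G
      have hgWX : ⇑g '' W ⊆ X := by
        rintro - ⟨w, hw, rfl⟩; exact hGXX g hg w (hWX hw)
      by_cases hc : (⇑h '' X ∩ X).Nonempty
      · -- h is the identity on X
        have hid : ∀ x ∈ X, h x = x := hHid h hh hc
        have h1 : ⇑h '' (⇑g '' W) = ⇑g '' W := by
          rw [Set.image_congr (fun z hz => hid z (hgWX hz)), Set.image_id']
        refine ⟨k * g, G.mul_mem hkG hg, 1, H.one_mem, ?_⟩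
        rw [h1, Equiv.Perm.coe_one, Set.image_id, Equiv.Perm.coe_mul, Set.image_comp]
      · -- h '' X is disjoint from X, so k fixes h '' (g '' W) pointwise
        have hfix : ∀ z ∈ ⇑h '' (⇑g '' W), k z = z := by
          rintro - ⟨x, hx, rfl⟩
          have hxX : x ∈ X := hgWX hx
          have : h x ∉ X := fun hmem => hc ⟨h x, ⟨x, hxX, rfl⟩, hmem⟩
          exact hGfix k hkG _ this
        have h2 : ⇑k '' (⇑h '' (⇑g '' W)) = ⇑h '' (⇑g '' W) := by
          rw [Set.image_congr (g := fun z => z) (fun z hz => hfix z hz), Set.image_id']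
        exact ⟨g, hg, h, hh, h2⟩
    · -- k ∈ H
      refine ⟨g, hg, k * h, H.mul_mem hkH hh, ?_⟩
      rw [Equiv.Perm.coe_mul, Set.image_comp]
  have keyInv : ∀ k, k ∈ (G : Set (Equiv.Perm Z)) ∪ (H : Set (Equiv.Perm Z)) →
      k⁻¹ ∈ (G : Set (Equiv.Perm Z)) ∪ (H : Set (Equiv.Perm Z)) := by
    rintro k (hk | hk)
    · exact Or.inl (G.inv_mem hk)
    · exact Or.inr (H.inv_mem hk)
  -- full induction over the generated subgroup
  have main : ∀ u ∈ G ⊔ H, (∀ A ∈ S, ⇑u '' A ∈ S) ∧ (∀ A ∈ S, ⇑u⁻¹ '' A ∈ S) := by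
    intro u hu
    rw [Subgroup.sup_eq_closure] at hu
    induction hu using Subgroup.closure_induction with
    | mem x hx => exact ⟨key x hx, key x⁻¹ (keyInv x hx)⟩
    | one => simp
    | mul x y hx hy ihx ihy =>
      constructor
      · intro A hA
        rw [Equiv.Perm.coe_mul, Set.image_comp]
        exact ihx.1 _ (ihy.1 A hA)
      · intro A hA
        rw [mul_inv_rev, Equiv.Perm.coe_mul, Set.image_comp]
        exact ihy.2 _ (ihx.2 A hA)
    | inv x hx ihx => exact ⟨ihx.2, by simpa using ihx.1⟩
  ext A
  constructor
  · rintro ⟨u, hu, rfl⟩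
    exact (main u hu).1 W ⟨1, G.one_mem, 1, H.one_mem, by simp⟩
  · rintro ⟨g, hg, h, hh, rfl⟩
    refine ⟨h * g, mul_mem (le_sup_right (α := Subgroup (Equiv.Perm Z)) hh)
      (le_sup_left (α := Subgroup (Equiv.Perm Z)) hg), ?_⟩
    rw [Equiv.Perm.coe_mul, Set.image_comp]
end

section
/- Let (Z, Y, H, X) be a pre-wreath structure and let G be a subgroup of Sym(Z) whose support is contained in X. Let K be the subgroup of Sym(Z) generated by all conjugates j⁻¹Gj with j ∈ H. Then there exists a group homomorphism φ from ⟨G, H⟩ to H that restricts to the identity on H and whose kernel is exactly K. In particular K is a normal subgroup of ⟨G, H⟩, K ∩ H = {1}, and ⟨G, H⟩ = K·H. -/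
/-! The translates `b • X = ⇑b '' X` (`b ∈ H`) form a system of blocks: by (ii) any two are
equal or disjoint. An element of `G` preserves `X` and fixes every block disjoint from `X`, so it
preserves every block; as `H` permutes the blocks, so does every conjugate `j⁻¹ g j`, and hence
all of `K`. By (iii) the only element of `H` preserving every block is `1`, so `K ⊓ H = ⊥`.
Since `H` normalizes `K` and `G ≤ K`, the group `⟨G, H⟩ = K H` has normal subgroup `K` with
complement `H`, and `φ` is the projection `⟨G, H⟩ → ⟨G, H⟩ ⧸ K ≃* H`. -/

open Pointwise MulAction

namespace Subgroup

variable {P : Type*} [Group P]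

def conjClosure (G H : Subgroup P) : Subgroup P :=
  closure {x | ∃ g ∈ G, ∃ j ∈ H, x = j⁻¹ * g * j}

section ConjClosure

variable {G H : Subgroup P}

lemma le_conjClosure : G ≤ conjClosure G H := fun g hg =>
  subset_closure ⟨g, hg, 1, one_mem H, by group⟩

lemma conjClosure_le_sup : conjClosure G H ≤ G ⊔ H := by
  rw [conjClosure, closure_le]
  rintro _ ⟨g, hg, j, hj, rfl⟩
  have hj' : j ∈ G ⊔ H := mem_sup_right hj
  exact mul_mem (mul_mem (inv_mem hj') (mem_sup_left hg)) hj'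

lemma le_normalizer_conjClosure : H ≤ normalizer (conjClosure G H : Set P) := by
  rw [conjClosure, le_normalizer_closure_iff]
  rintro h hh _ ⟨g, hg, j, hj, rfl⟩
  exact subset_closure ⟨g, hg, j * h⁻¹, mul_mem hj (inv_mem hh), by group⟩

lemma sup_le_normalizer_conjClosure : G ⊔ H ≤ normalizer (conjClosure G H : Set P) :=
  sup_le (le_conjClosure.trans le_normalizer) le_normalizer_conjClosure

lemma conjClosure_sup_eq : conjClosure G H ⊔ H = G ⊔ H :=
  le_antisymm (sup_le conjClosure_le_sup le_sup_right) (sup_le_sup_right le_conjClosure H)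

lemma exists_mul_of_mem_sup {w : P} (hw : w ∈ G ⊔ H) :
    ∃ k ∈ conjClosure G H, ∃ h ∈ H, w = k * h := by
  rw [← conjClosure_sup_eq, ← SetLike.mem_coe,
    coe_mul_of_right_le_normalizer_left _ _ le_normalizer_conjClosure] at hw
  obtain ⟨k, hk, h, hh, rfl⟩ := hw
  exact ⟨k, hk, h, hh, rfl⟩

end ConjClosure

lemma IsComplement'.exists_retraction {M : Type*} [Group M] {H N : Subgroup M} [N.Normal]
    (h : H.IsComplement' N) : ∃ φ : M →* H, (∀ x : H, φ x = x) ∧ φ.ker = N :=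
  ⟨h.QuotientMulEquiv.toMonoidHom.comp (QuotientGroup.mk' N),
    fun x => h.QuotientMulEquiv.apply_symm_apply x, by ext; simp⟩

lemma exists_retraction_of_le_normalizer {N H M : Subgroup P}
    (hH : H ≤ normalizer (N : Set P)) (hNH : N ⊓ H = ⊥) (hM : N ⊔ H = M) :
    ∃ φ : M →* H, (∀ h ∈ H, ∀ hw : h ∈ M, (φ ⟨h, hw⟩ : P) = h) ∧
      ∀ w : M, φ w = 1 ↔ (w : P) ∈ N := by
  subst hM
  have : (N.subgroupOf (N ⊔ H)).Normal :=
    (normal_subgroupOf_iff_le_normalizer le_sup_left).mpr (sup_le le_normalizer hH)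
  have hc : (H.subgroupOf (N ⊔ H)).IsComplement' (N.subgroupOf (N ⊔ H)) := by
    refine isComplement'_of_disjoint_and_mul_eq_univ ?_ ?_
    · rw [disjoint_def]
      intro x hxH hxN
      have hx : (x : P) ∈ N ⊓ H := ⟨hxN, hxH⟩
      rw [hNH, mem_bot] at hx
      exact Subtype.ext hx
    · refine Set.eq_univ_of_forall fun w => ?_
      have hw : (w : P) ∈ ((H ⊔ N : Subgroup P) : Set P) := sup_comm N H ▸ w.2
      rw [coe_mul_of_left_le_normalizer_right H N hH] at hw
      obtain ⟨h, hh, n, hn, hhn⟩ := hw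
      exact ⟨⟨h, mem_sup_right hh⟩, hh, ⟨n, mem_sup_left hn⟩, hn, Subtype.ext hhn⟩
  obtain ⟨ψ, hψ, hker⟩ := hc.exists_retraction
  refine ⟨(subgroupOfEquivOfLe le_sup_right).toMonoidHom.comp ψ, fun h hh hw => ?_, fun w => ?_⟩
  · simp [hψ ⟨⟨h, hw⟩, hh⟩]
  · simp [← MonoidHom.mem_ker, hker, mem_subgroupOf]

end Subgroup

section PreWreath

open Subgroup

variable {Z : Type*} {Y X : Set Z} {H G : Subgroup (Equiv.Perm Z)}

lemma IsPreWreath.smul_eq_or_disjoint (hpw : IsPreWreath Y H X) {b : Equiv.Perm Z} (hb : b ∈ H) :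
    b • X = X ∨ Disjoint (b • X) X := by
  rw [or_iff_not_imp_right, Set.not_disjoint_iff_nonempty_inter]
  exact fun hmeet => Set.EqOn.image_eq_self (hpw.2.2.2.2.1 b hb hmeet)

lemma smul_eq_self_of_supp_subset (hG : Supp G ⊆ X) {g : Equiv.Perm Z} (hg : g ∈ G) :
    g • X = X :=
  set_mem_fixedBy_of_movedBy_subset fun _ hz => hG ⟨g, hg, hz⟩

lemma smul_eq_self_of_disjoint_supp (hG : Supp G ⊆ X) {g : Equiv.Perm Z} (hg : g ∈ G)
    {B : Set Z} (hB : Disjoint B X) : g • B = B :=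
  set_mem_fixedBy_of_subset_fixedBy fun _ hz =>
    of_not_not fun hmoved => Set.disjoint_left.mp hB hz (hG ⟨g, hg, hmoved⟩)

lemma IsPreWreath.smul_block_eq (hpw : IsPreWreath Y H X) (hG : Supp G ⊆ X)
    {g b : Equiv.Perm Z} (hg : g ∈ G) (hb : b ∈ H) : g • b • X = b • X := by
  rcases hpw.smul_eq_or_disjoint hb with hbX | hbX
  · rw [hbX]
    exact smul_eq_self_of_supp_subset hG hg
  · exact smul_eq_self_of_disjoint_supp hG hg hbX

lemma IsPreWreath.conjClosure_le_stabilizer (hpw : IsPreWreath Y H X) (hG : Supp G ⊆ X)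
    {a : Equiv.Perm Z} (ha : a ∈ H) : conjClosure G H ≤ stabilizer (Equiv.Perm Z) (a • X) := by
  rw [conjClosure, closure_le]
  rintro _ ⟨g, hg, j, hj, rfl⟩
  rw [SetLike.mem_coe, mem_stabilizer_iff, mul_smul, mul_smul, smul_smul j a,
    hpw.smul_block_eq hG hg (mul_mem hj ha), smul_smul, inv_mul_cancel_left]

lemma IsPreWreath.conjClosure_inf_eq_bot (hpw : IsPreWreath Y H X) (hG : Supp G ⊆ X) :
    conjClosure G H ⊓ H = ⊥ := by
  refine (eq_bot_iff_forall _).mpr fun h ⟨hK, hH⟩ => of_not_not fun hne => ?_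
  obtain ⟨j, hj, hmoved⟩ := hpw.2.2.2.2.2 h hH hne
  exact hmoved (hpw.conjClosure_le_stabilizer hG hj hK)

end PreWreath

/-- Let `(Z, Y, H, X)` be a pre-wreath structure and `G ≤ Sym(Z)` with
support in `X`.  Let `K` be the subgroup generated by the conjugates `j⁻¹ g j`
(`g ∈ G`, `j ∈ H`).  Then there is a homomorphism `φ : ⟨G, H⟩ →* H` restricting to the
identity on `H` with kernel exactly `K`; in particular `K` is normal in `⟨G, H⟩`,
`K ∩ H = 1`, and `⟨G, H⟩ = K·H`. -/
theorem stmt7 {Z : Type*} (Y X : Set Z) (H G : Subgroup (Equiv.Perm Z))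
    (hpw : IsPreWreath Y H X) (hG : Supp G ⊆ X) :
    ∃ φ : (G ⊔ H : Subgroup (Equiv.Perm Z)) →* H,
      (∀ (h : Equiv.Perm Z) (hh : h ∈ H) (hw : h ∈ G ⊔ H),
        ((φ ⟨h, hw⟩ : H) : Equiv.Perm Z) = h) ∧
      (∀ w : (G ⊔ H : Subgroup (Equiv.Perm Z)), φ w = 1 ↔
        (w : Equiv.Perm Z) ∈
          Subgroup.closure {x : Equiv.Perm Z | ∃ g ∈ G, ∃ j ∈ H, x = j⁻¹ * g * j}) ∧
      (Subgroup.closure {x : Equiv.Perm Z | ∃ g ∈ G, ∃ j ∈ H, x = j⁻¹ * g * j} ≤ G ⊔ H) ∧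
      (∀ w ∈ G ⊔ H, ∀ k ∈
          Subgroup.closure {x : Equiv.Perm Z | ∃ g ∈ G, ∃ j ∈ H, x = j⁻¹ * g * j},
        w * k * w⁻¹ ∈
          Subgroup.closure {x : Equiv.Perm Z | ∃ g ∈ G, ∃ j ∈ H, x = j⁻¹ * g * j}) ∧
      (Subgroup.closure {x : Equiv.Perm Z | ∃ g ∈ G, ∃ j ∈ H, x = j⁻¹ * g * j} ⊓ H = ⊥) ∧
      (∀ w ∈ G ⊔ H, ∃ k ∈
          Subgroup.closure {x : Equiv.Perm Z | ∃ g ∈ G, ∃ j ∈ H, x = j⁻¹ * g * j},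
        ∃ h ∈ H, w = k * h) := by
  have hdisj := hpw.conjClosure_inf_eq_bot hG
  obtain ⟨φ, hφH, hφker⟩ := Subgroup.exists_retraction_of_le_normalizer
    Subgroup.le_normalizer_conjClosure hdisj Subgroup.conjClosure_sup_eq
  exact ⟨φ, hφH, hφker, Subgroup.conjClosure_le_sup,
    fun w hw k hk =>
      (Subgroup.mem_normalizer_iff.mp (Subgroup.sup_le_normalizer_conjClosure hw) k).mp hk,
    hdisj, fun w hw => Subgroup.exists_mul_of_mem_sup hw⟩
end

section
/- Let (Z, Y, H, X) be a pre-wreath structure, let G be a subgroup of Sym(Z) whose support is contained in X, and let N be a normal subgroup of ⟨G, H⟩. If N contains an element n such that An ≠ A for some set A in the carrier XH (i.e., the permutation induced by n on XH is nontrivial), then there exists a subgroup S of N together with a surjective group homomorphism from S onto G. -/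
/-!
Conjugating by an element of `H`, we may assume that some `σ ∈ N` moves `X` itself. As `⟨G, H⟩`
permutes the carrier, whose members are pairwise equal or disjoint, `σX` is disjoint from `X`.
Hence `G` (supported in `X`) and `σGσ⁻¹` (supported in `σX`) commute and meet trivially, so
`(a, b) ↦ a · σbσ⁻¹` embeds `G × G` into `Sym(Z)`. The commutators `gσg⁻¹σ⁻¹`, images of
`(g, g⁻¹)`, lie in `N`; so the part of `N` inside this copy of `G × G` projects onto `G`.
-/

open Pointwise

namespace Subgroup

variable {P : Type*} [Group P]

theorem exists_le_surjective_of_commute_conj (G N : Subgroup P) {σ : P} (hσ : σ ∈ N)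
    (hnorm : ∀ g ∈ G, g * σ * g⁻¹ ∈ N)
    (hcomm : ∀ a ∈ G, ∀ b ∈ G, Commute a (σ * b * σ⁻¹))
    (hdisj : Disjoint G (G.map (MulAut.conj σ).toMonoidHom)) :
    ∃ S : Subgroup P, S ≤ N ∧ ∃ φ : S →* G, Function.Surjective φ := by
  let Ψ : G × G →* P := G.subtype.noncommCoprod ((MulAut.conj σ).toMonoidHom.comp G.subtype)
    fun a b => hcomm a a.2 b b.2
  have hΨ : Function.Injective Ψ := by
    refine (MonoidHom.noncommCoprod_injective _ _ _).mpr
      ⟨G.subtype_injective, (MulAut.conj σ).injective.comp G.subtype_injective, ?_⟩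
    rwa [G.range_subtype, MonoidHom.range_comp, G.range_subtype]
  let e : G × G ≃* Ψ.range := MonoidHom.ofInjective hΨ
  refine ⟨N ⊓ Ψ.range, inf_le_left,
    ((MonoidHom.fst G G).comp e.symm.toMonoidHom).comp (inclusion inf_le_right), fun g => ?_⟩
  have hN : Ψ (g, g⁻¹) ∈ N := by
    have : Ψ (g, g⁻¹) = (g * σ * g⁻¹) * σ⁻¹ := by simp [Ψ, mul_assoc]
    exact this ▸ mul_mem (hnorm g g.2) (inv_mem hσ)
  refine ⟨⟨Ψ (g, g⁻¹), hN, (g, g⁻¹), rfl⟩, ?_⟩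
  exact congrArg Prod.fst (e.symm_apply_apply (g, g⁻¹))

end Subgroup

namespace Equiv.Perm

variable {α : Type*} {s : Set α}

theorem image_eq_self_of_forall_notMem {σ : Perm α} (hσ : ∀ z ∉ s, σ z = z) : σ '' s = s := by
  have hcompl : σ '' sᶜ = sᶜ := Set.EqOn.image_eq_self hσ
  rw [← compl_compl s, Set.image_compl_eq σ.bijective, hcompl]

theorem conj_apply_eq_self_of_disjoint_image {σ τ : Perm α} (hσ : _root_.Disjoint (σ '' s) s)
    (hτ : ∀ z ∉ s, τ z = z) {z : α} (hz : z ∈ s) : (σ * τ * σ⁻¹) z = z := by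
  have : σ⁻¹ z ∉ s := fun h => Set.disjoint_left.mp hσ ⟨σ⁻¹ z, h, by simp⟩ hz
  rw [mul_apply, mul_apply, hτ _ this]
  exact σ.apply_symm_apply z

theorem commute_conj_of_disjoint_image {σ a b : Perm α} (hσ : _root_.Disjoint (σ '' s) s)
    (ha : ∀ z ∉ s, a z = z) (hb : ∀ z ∉ s, b z = z) : Commute a (σ * b * σ⁻¹) :=
  Disjoint.commute fun z => by
    by_cases hz : z ∈ s
    · exact .inr (conj_apply_eq_self_of_disjoint_image hσ hb hz)
    · exact .inl (ha z hz)

end Equiv.Perm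

section Supp

variable {α : Type*} {K : Subgroup (Equiv.Perm α)} {s : Set α}

theorem apply_eq_self_of_Supp_subset (hK : Supp K ⊆ s) {g : Equiv.Perm α} (hg : g ∈ K) {z : α}
    (hz : z ∉ s) : g z = z :=
  not_not.mp fun h => hz (hK ⟨g, hg, h⟩)

theorem disjoint_map_conj_of_Supp_subset (hK : Supp K ⊆ s) {σ : Equiv.Perm α}
    (hσ : _root_.Disjoint (σ '' s) s) : Disjoint K (K.map (MulAut.conj σ).toMonoidHom) := by
  rw [Subgroup.disjoint_def]
  rintro _ hg ⟨b, hb, rfl⟩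
  ext z
  by_cases hz : z ∈ s
  · exact Equiv.Perm.conj_apply_eq_self_of_disjoint_image hσ
      (fun _ => apply_eq_self_of_Supp_subset hK hb) hz
  · exact apply_eq_self_of_Supp_subset hK hg hz

end Supp

theorem mem_wreathCarrier_self {Z : Type*} (H : Subgroup (Equiv.Perm Z)) (X : Set Z) :
    X ∈ wreathCarrier H X :=
  ⟨1, one_mem H, (Set.image_id X).symm⟩

namespace IsPreWreath

variable {Z : Type*} {Y X : Set Z} {H : Subgroup (Equiv.Perm Z)}

theorem eq_of_mem_wreathCarrier_of_inter_nonempty (hpw : IsPreWreath Y H X) {A : Set Z}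
    (hA : A ∈ wreathCarrier H X) (hAX : (A ∩ X).Nonempty) : A = X := by
  obtain ⟨-, -, -, -, hmeet, -⟩ := hpw
  obtain ⟨h, hh, rfl⟩ := hA
  exact Set.EqOn.image_eq_self (hmeet h hh hAX)

theorem le_stabilizer_wreathCarrier_of_Supp_subset (hpw : IsPreWreath Y H X)
    {G : Subgroup (Equiv.Perm Z)} (hG : Supp G ⊆ X) :
    G ≤ MulAction.stabilizer (Equiv.Perm Z) (wreathCarrier H X) := by
  refine (MulAction.le_stabilizer_iff_smul_le _ G).mpr ?_
  rintro g hg _ ⟨A, hA, rfl⟩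
  change g '' A ∈ wreathCarrier H X
  by_cases hAX : (A ∩ X).Nonempty
  · rw [hpw.eq_of_mem_wreathCarrier_of_inter_nonempty hA hAX,
      Equiv.Perm.image_eq_self_of_forall_notMem fun _ => apply_eq_self_of_Supp_subset hG hg]
    exact mem_wreathCarrier_self H X
  · refine Set.EqOn.image_eq_self (fun z hz => ?_) ▸ hA
    exact apply_eq_self_of_Supp_subset hG hg fun hzX => hAX ⟨z, hz, hzX⟩

end IsPreWreath

theorem le_stabilizer_wreathCarrier {Z : Type*} (H : Subgroup (Equiv.Perm Z)) (X : Set Z) :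
    H ≤ MulAction.stabilizer (Equiv.Perm Z) (wreathCarrier H X) := by
  refine (MulAction.le_stabilizer_iff_smul_le _ H).mpr ?_
  rintro h hh _ ⟨_, ⟨j, hj, rfl⟩, rfl⟩
  exact ⟨h * j, mul_mem hh hj, (mul_smul h j X).symm⟩

/-- Let `(Z, Y, H, X)` be a pre-wreath structure, `G ≤ Sym(Z)` with
support in `X`, and `N` a normal subgroup of `⟨G, H⟩`.  If some element of `N` induces a
nontrivial permutation of the carrier `XH`, then some subgroup of `N` surjects onto
`G`. -/
theorem stmt8 {Z : Type*} (Y X : Set Z) (H G : Subgroup (Equiv.Perm Z))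
    (hpw : IsPreWreath Y H X) (hG : Supp G ⊆ X)
    (N : Subgroup (Equiv.Perm Z)) (hNle : N ≤ G ⊔ H)
    (hNnormal : ∀ w ∈ G ⊔ H, ∀ n ∈ N, w * n * w⁻¹ ∈ N)
    (hmove : ∃ n ∈ N, ∃ A ∈ wreathCarrier H X, ⇑n '' A ≠ A) :
    ∃ S : Subgroup (Equiv.Perm Z), S ≤ N ∧
      ∃ φ : S →* G, Function.Surjective φ := by
  obtain ⟨n, hnN, _, ⟨k, hk, rfl⟩, hnA⟩ := hmove
  set σ := k⁻¹ * n * k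
  have hσN : σ ∈ N := by simpa using hNnormal k⁻¹ (Subgroup.mem_sup_right (inv_mem hk)) n hnN
  have hσX : σ • X ≠ X := by
    rw [mul_smul, mul_smul, Ne, inv_smul_eq_iff]
    exact hnA
  have hσC : σ • X ∈ wreathCarrier H X := by
    have hstab := sup_le (hpw.le_stabilizer_wreathCarrier_of_Supp_subset hG)
      (le_stabilizer_wreathCarrier H X) (hNle hσN)
    rw [MulAction.mem_stabilizer_iff] at hstab
    exact hstab ▸ Set.smul_mem_smul_set (mem_wreathCarrier_self H X)
  have hdisj : Disjoint (σ '' X) X := not_not.mp fun hmeet =>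
    hσX <| hpw.eq_of_mem_wreathCarrier_of_inter_nonempty hσC
      (Set.not_disjoint_iff_nonempty_inter.mp hmeet)
  exact G.exists_le_surjective_of_commute_conj N hσN
    (fun g hg => hNnormal g (Subgroup.mem_sup_left hg) σ hσN)
    (fun a ha b hb => Equiv.Perm.commute_conj_of_disjoint_image hdisj
      (fun _ => apply_eq_self_of_Supp_subset hG ha) (fun _ => apply_eq_self_of_Supp_subset hG hb))
    (disjoint_map_conj_of_Supp_subset hG hdisj)
end

section
/- Let (Z, Y, H, X) be a pre-wreath structure, let G be a subgroup of Sym(Z) whose support is contained in X, and let N be a normal subgroup of ⟨G, H⟩. If every element n of N satisfies An = A for every set A in the carrier XH (i.e., every element of N induces the trivial permutation of XH), then there is a surjective group homomorphism from the quotient group ⟨G, H⟩/N onto H. -/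
/-- Let `(Z, Y, H, X)` be a pre-wreath structure, `G ≤ Sym(Z)` with
support in `X`, and `N` a normal subgroup of `⟨G, H⟩`.  If every element of `N` induces
the trivial permutation of the carrier `XH`, then the quotient `⟨G, H⟩/N` surjects onto
`H`. -/
theorem stmt9 {Z : Type*} (Y X : Set Z) (H G : Subgroup (Equiv.Perm Z))
    (hpw : IsPreWreath Y H X) (hG : Supp G ⊆ X)
    (N : Subgroup (G ⊔ H : Subgroup (Equiv.Perm Z))) [N.Normal]
    (htriv : ∀ n : (G ⊔ H : Subgroup (Equiv.Perm Z)), n ∈ N →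
      ∀ A ∈ wreathCarrier H X, ⇑(n : Equiv.Perm Z) '' A = A) :
    ∃ φ : ((G ⊔ H : Subgroup (Equiv.Perm Z)) ⧸ N) →* H, Function.Surjective φ := by
  classical
  obtain ⟨-, -, -, -, hmeet, hfaith⟩ := hpw
  -- G fixes every point outside X
  have hGfix : ∀ g ∈ G, ∀ z : Z, z ∉ X → g z = z := by
    intro g hg z hz
    by_contra hne
    exact hz (hG ⟨g, hg, hne⟩)
  have hGXsub : ∀ g ∈ G, ⇑g '' X ⊆ X := by
    intro g hg z hz
    obtain ⟨x, hx, rfl⟩ := hz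
    by_contra hgx
    have h2 : g (g x) = g x := hGfix g hg _ hgx
    have h3 : g x = x := g.injective h2
    rw [h3] at hgx; exact hgx hx
  have hGX : ∀ g ∈ G, ⇑g '' X = X := by
    intro g hg
    apply Set.Subset.antisymm (hGXsub g hg)
    intro x hx
    have hginv : g⁻¹ x ∈ X := hGXsub g⁻¹ (inv_mem hg) ⟨x, hx, rfl⟩
    exact ⟨g⁻¹ x, hginv, by simp⟩
  -- G acts trivially on the carrier
  have hGcar : ∀ g ∈ G, ∀ A ∈ wreathCarrier H X, ⇑g '' A = A := by
    intro g hg A hA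
    obtain ⟨j, hj, rfl⟩ := hA
    by_cases hc : (⇑j '' X ∩ X).Nonempty
    · have hjX : ⇑j '' X = X := by
        have hfix := hmeet j hj hc
        ext z; constructor
        · rintro ⟨x, hx, rfl⟩; rw [hfix x hx]; exact hx
        · intro hz; exact ⟨z, hz, hfix z hz⟩
      rw [hjX]; exact hGX g hg
    · have hout : ∀ a ∈ ⇑j '' X, g a = a := by
        intro a ha
        apply hGfix g hg
        intro haX
        exact hc ⟨a, ha, haX⟩
      calc ⇑g '' (⇑j '' X) = id '' (⇑j '' X) := Set.image_congr hout
        _ = ⇑j '' X := Set.image_id _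
  -- H maps carrier sets to carrier sets
  have hclosed : ∀ h ∈ H, ∀ A ∈ wreathCarrier H X, ⇑h '' A ∈ wreathCarrier H X := by
    rintro h hh A ⟨j, hj, rfl⟩
    exact ⟨h * j, mul_mem hh hj, by rw [Equiv.Perm.coe_mul, Set.image_comp]⟩
  -- uniqueness: H acts faithfully on the carrier
  have huniq : ∀ h ∈ H, ∀ h' ∈ H,
      (∀ A ∈ wreathCarrier H X, ⇑h '' A = ⇑h' '' A) → h = h' := by
    intro h hh h' hh' heq
    by_contra hne
    have hk : h'⁻¹ * h ∈ H := mul_mem (inv_mem hh') hh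
    have hkne : h'⁻¹ * h ≠ 1 := by
      intro h1; exact hne (inv_mul_eq_one.mp h1).symm
    obtain ⟨j, hj, hjne⟩ := hfaith _ hk hkne
    apply hjne
    have hmem : ⇑j '' X ∈ wreathCarrier H X := ⟨j, hj, rfl⟩
    rw [Equiv.Perm.coe_mul, Set.image_comp, heq _ hmem,
        ← Set.image_comp, ← Equiv.Perm.coe_mul, inv_mul_cancel, Equiv.Perm.coe_one,
        Set.image_id]
  -- the subgroup of permutations acting on the carrier like some element of H
  set Kp : Equiv.Perm Z → Prop :=
    fun w => ∃ h ∈ H, ∀ A ∈ wreathCarrier H X, ⇑w '' A = ⇑h '' A with hKp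
  have hKmul : ∀ w₁ w₂ : Equiv.Perm Z, Kp w₁ → Kp w₂ → Kp (w₁ * w₂) := by
    rintro w₁ w₂ ⟨h₁, hh₁, p₁⟩ ⟨h₂, hh₂, p₂⟩
    refine ⟨h₁ * h₂, mul_mem hh₁ hh₂, fun A hA => ?_⟩
    rw [Equiv.Perm.coe_mul, Set.image_comp, p₂ A hA, p₁ _ (hclosed h₂ hh₂ A hA),
        Equiv.Perm.coe_mul, Set.image_comp]
  have hKinv : ∀ w : Equiv.Perm Z, Kp w → Kp w⁻¹ := by
    rintro w ⟨h, hh, p⟩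
    refine ⟨h⁻¹, inv_mem hh, fun A hA => ?_⟩
    have h1 : ⇑w '' (⇑h⁻¹ '' A) = A := by
      rw [p _ (hclosed h⁻¹ (inv_mem hh) A hA), ← Set.image_comp, ← Equiv.Perm.coe_mul,
          mul_inv_cancel, Equiv.Perm.coe_one, Set.image_id]
    calc ⇑w⁻¹ '' A = ⇑w⁻¹ '' (⇑w '' (⇑h⁻¹ '' A)) := by rw [h1]
      _ = ⇑h⁻¹ '' A := by
          rw [← Set.image_comp, ← Equiv.Perm.coe_mul, inv_mul_cancel, Equiv.Perm.coe_one,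
              Set.image_id]
  let K : Subgroup (Equiv.Perm Z) :=
    { carrier := setOf Kp
      one_mem' := ⟨1, one_mem H, fun A _ => rfl⟩
      mul_mem' := fun ha hb => hKmul _ _ ha hb
      inv_mem' := fun ha => hKinv _ ha }
  have hle : (G ⊔ H : Subgroup (Equiv.Perm Z)) ≤ K := by
    apply sup_le
    · intro g hg
      exact ⟨1, one_mem H, fun A hA => by
        rw [hGcar g hg A hA, Equiv.Perm.coe_one, Set.image_id]⟩
    · intro h hh
      exact ⟨h, hh, fun A _ => rfl⟩
  have hex : ∀ w : (G ⊔ H : Subgroup (Equiv.Perm Z)),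
      ∃ h ∈ H, ∀ A ∈ wreathCarrier H X, ⇑(w : Equiv.Perm Z) '' A = ⇑h '' A :=
    fun w => hle w.2
  let f : (G ⊔ H : Subgroup (Equiv.Perm Z)) → H :=
    fun w => ⟨(hex w).choose, (hex w).choose_spec.1⟩
  have fprop : ∀ w : (G ⊔ H : Subgroup (Equiv.Perm Z)), ∀ A ∈ wreathCarrier H X,
      ⇑(w : Equiv.Perm Z) '' A = ⇑((f w : H) : Equiv.Perm Z) '' A :=
    fun w => (hex w).choose_spec.2
  have fchar : ∀ w : (G ⊔ H : Subgroup (Equiv.Perm Z)), ∀ h ∈ H,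
      (∀ A ∈ wreathCarrier H X, ⇑(w : Equiv.Perm Z) '' A = ⇑h '' A) →
      ((f w : H) : Equiv.Perm Z) = h := by
    intro w h hh hp
    apply huniq _ (f w).2 h hh
    intro A hA
    rw [← fprop w A hA, hp A hA]
  have fmul : ∀ a b : (G ⊔ H : Subgroup (Equiv.Perm Z)), f (a * b) = f a * f b := by
    intro a b
    apply Subtype.ext
    apply fchar (a * b) _ (mul_mem (f a).2 (f b).2)
    intro A hA
    calc ⇑((a * b : (G ⊔ H : Subgroup (Equiv.Perm Z))) : Equiv.Perm Z) '' A
        = ⇑(a : Equiv.Perm Z) '' (⇑(b : Equiv.Perm Z) '' A) := by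
          rw [Subgroup.coe_mul, Equiv.Perm.coe_mul, Set.image_comp]
      _ = ⇑(a : Equiv.Perm Z) '' (⇑((f b : H) : Equiv.Perm Z) '' A) := by
          rw [fprop b A hA]
      _ = ⇑((f a : H) : Equiv.Perm Z) '' (⇑((f b : H) : Equiv.Perm Z) '' A) := by
          rw [fprop a _ (hclosed _ (f b).2 A hA)]
      _ = ⇑(((f a * f b : H)) : Equiv.Perm Z) '' A := by
          rw [Subgroup.coe_mul, Equiv.Perm.coe_mul, Set.image_comp]
  let φ0 : (G ⊔ H : Subgroup (Equiv.Perm Z)) →* H := MonoidHom.mk' f fmul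
  have hone : ∀ n ∈ N, φ0 n = 1 := by
    intro n hn
    apply Subtype.ext
    show ((f n : H) : Equiv.Perm Z) = ((1 : H) : Equiv.Perm Z)
    rw [OneMemClass.coe_one]
    apply fchar n 1 (one_mem H)
    intro A hA
    rw [htriv n hn A hA, Equiv.Perm.coe_one, Set.image_id]
  refine ⟨QuotientGroup.lift N φ0 hone, ?_⟩
  rintro ⟨h, hh⟩
  refine ⟨QuotientGroup.mk ⟨h, Subgroup.mem_sup_right hh⟩, ?_⟩
  show φ0 _ = _
  apply Subtype.ext
  exact fchar _ h hh (fun A _ => rfl)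
end

section
/- Assume the inductive setting. Then for all integers j ≠ k, the union of the sets in the family W_{j-1}R_j = {W_{j-1}r : r ∈ R_j} is disjoint from the union of the sets in the family W_{k-1}R_k = {W_{k-1}r : r ∈ R_k}. Moreover, for all integers j < k, every set W_{k-1}r with r ∈ R_k is disjoint from Supp(H_j). -/
/-- The inductive setting: `(Z, fY₀, H₁, Y₀)` is a pre-wreath structure (`Y₁ = Y₀f` is
the image of `Y₀` under the bijection `f`), `Y₀ ⊆ Supp(H₁) ⊆ Y₁` with `Supp(H₁) ≠ Y₁`,
and `W₀` is a nonempty subset of `Y₀` whose image under `f` misses `Supp(H₁)`. -/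
def InductiveSetting {Z : Type*} (H₁ : Subgroup (Equiv.Perm Z)) (f : Equiv.Perm Z)
    (Y₀ W₀ : Set Z) : Prop :=
  IsPreWreath (⇑f '' Y₀) H₁ Y₀ ∧
  Y₀ ⊆ Supp H₁ ∧ Supp H₁ ⊆ ⇑f '' Y₀ ∧ Supp H₁ ≠ ⇑f '' Y₀ ∧
  W₀.Nonempty ∧ W₀ ⊆ Y₀ ∧ (⇑f '' W₀) ∩ Supp H₁ = ∅

/-- `Hᵢ`, the conjugate of `H₁` carried over by `f^(i-1)`: this is the paper's
`f^{-(i-1)} H₁ f^{i-1}` written in right-action notation, i.e. the subgroup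
`{f^(i-1) h f^(-(i-1)) : h ∈ H₁}` of permutations acting on the left. -/
def Hseq {Z : Type*} (H₁ : Subgroup (Equiv.Perm Z)) (f : Equiv.Perm Z) (i : ℤ) :
    Subgroup (Equiv.Perm Z) :=
  Subgroup.map (MulAut.conj (f ^ (i - 1))).toMonoidHom H₁

/-- `R_j`, the subgroup generated by the `Hᵢ` with `i ≥ j`. -/
def Rseq {Z : Type*} (H₁ : Subgroup (Equiv.Perm Z)) (f : Equiv.Perm Z) (j : ℤ) :
    Subgroup (Equiv.Perm Z) :=
  Subgroup.closure (⋃ i ∈ {i : ℤ | j ≤ i}, (Hseq H₁ f i : Set (Equiv.Perm Z)))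

/-- `Lᵢ`, the subgroup generated by the `H_j` with `j < i`. -/
def Lseq {Z : Type*} (H₁ : Subgroup (Equiv.Perm Z)) (f : Equiv.Perm Z) (i : ℤ) :
    Subgroup (Equiv.Perm Z) :=
  Subgroup.closure (⋃ j ∈ {j : ℤ | j < i}, (Hseq H₁ f j : Set (Equiv.Perm Z)))

/-- `M`, the subgroup generated by all the `Hᵢ`, `i ∈ ℤ`. -/
def Mgrp {Z : Type*} (H₁ : Subgroup (Equiv.Perm Z)) (f : Equiv.Perm Z) :
    Subgroup (Equiv.Perm Z) :=
  Subgroup.closure (⋃ i : ℤ, (Hseq H₁ f i : Set (Equiv.Perm Z)))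

/-- `Wᵢ = W₀fⁱ`, the image of `W₀` under the `i`-th power of `f`. -/
def Wseq {Z : Type*} (W₀ : Set Z) (f : Equiv.Perm Z) (i : ℤ) : Set Z :=
  ⇑(f ^ i) '' W₀


/-!
Write `Yᵢ = Y₀fⁱ`. The sets `Yᵢ` and `Supp(Hᵢ) = Supp(H₁)f^{i-1}` increase with `i`,
`Supp(Hᵢ) ⊆ Yᵢ`, and every element of `H_{i+1}` either fixes `Yᵢ` pointwise or moves it off
itself. So if `T` is generated by the `Hᵢ` with `m ≤ i ≤ n`, an element of `⟨T, H_{n+1}⟩` sending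
a point `x ∈ Yₙ` back into `Yₙ` moves `x` like some element of `T`. Induction on `n` shows that
no element of `R_m` sends a point of `W_k` into `Supp(H_k)`: for `n = k` this holds because
`W_k` misses `Supp(H_k) ⊇ Supp(Hᵢ)` for `i ≤ k`. Both claims follow, the first one because
`W_{j-1} ⊆ Supp(H_j)` and `r⁻¹r' ∈ R_j` for `r ∈ R_j`, `r' ∈ R_k`, `j < k`.
-/

open Equiv

section Support

variable {Z : Type*}

lemma apply_eq_of_notMem_Supp {K : Subgroup (Perm Z)} {g : Perm Z} (hg : g ∈ K) {z : Z}
    (hz : z ∉ Supp K) : g z = z := by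
  by_contra h
  exact hz ⟨g, hg, h⟩

lemma apply_mem_of_Supp_subset {K : Subgroup (Perm Z)} {B : Set Z} (hK : Supp K ⊆ B)
    {g : Perm Z} (hg : g ∈ K) {y : Z} (hy : y ∈ B) : g y ∈ B := by
  by_contra h
  have hfix : g (g y) = g y := apply_eq_of_notMem_Supp hg fun hs => h (hK hs)
  rw [g.injective hfix] at h
  exact h hy

lemma Supp_subset_iff_le_fixingSubgroup {K : Subgroup (Perm Z)} {A : Set Z} :
    Supp K ⊆ A ↔ K ≤ fixingSubgroup (Perm Z) Aᶜ := by
  simp only [Set.subset_def, SetLike.le_def, mem_fixingSubgroup_iff, Perm.smul_def]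
  constructor
  · intro h g hg z hz
    by_contra hne
    exact hz (h z ⟨g, hg, hne⟩)
  · rintro h z ⟨g, hg, hne⟩
    by_contra hz
    exact hne (h hg z hz)

lemma Supp_iSup_subset {ι : Sort*} {K : ι → Subgroup (Perm Z)} {A : Set Z}
    (h : ∀ i, Supp (K i) ⊆ A) : Supp (⨆ i, K i) ⊆ A := by
  simp only [Supp_subset_iff_le_fixingSubgroup] at h ⊢
  exact iSup_le h

lemma Supp_map_conj (K : Subgroup (Perm Z)) (c : Perm Z) :
    Supp (K.map (MulAut.conj c).toMonoidHom) = ⇑c '' Supp K := by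
  ext z
  constructor
  · rintro ⟨_, ⟨h, hh, rfl⟩, hz⟩
    refine ⟨c⁻¹ z, ⟨h, hh, fun hfix => hz ?_⟩, by simp⟩
    rw [MulEquiv.coe_toMonoidHom, MulAut.conj_apply, Perm.mul_apply, Perm.mul_apply, hfix,
      Perm.coe_inv, Equiv.apply_symm_apply]
  · rintro ⟨y, ⟨h, hh, hy⟩, rfl⟩
    exact ⟨_, ⟨h, hh, rfl⟩, by simpa using hy⟩

lemma mapsTo_of_mem_closure {s : Set (Perm Z)} (hs : ∀ g ∈ s, g⁻¹ ∈ s) {O : Set Z}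
    (hO : ∀ g ∈ s, Set.MapsTo g O O) {r : Perm Z} (hr : r ∈ Subgroup.closure s) :
    Set.MapsTo r O O := by
  induction hr using Subgroup.closure_induction'' with
  | mem g hg => exact hO g hg
  | inv_mem g hg => exact hO g⁻¹ (hs g hg)
  | one => exact Set.mapsTo_id O
  | mul g g' _ _ hg hg' => exact hg.comp hg'

end Support

/-- Condition (ii) of a pre-wreath structure `(Z, Y, K, X)`. -/
def FixesOrDisplaces {Z : Type*} (K : Subgroup (Perm Z)) (X : Set Z) : Prop :=
  ∀ g ∈ K, (⇑g '' X ∩ X).Nonempty → ∀ x ∈ X, g x = x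

namespace FixesOrDisplaces

variable {Z : Type*}

lemma map_conj {K : Subgroup (Perm Z)} {X : Set Z} (hK : FixesOrDisplaces K X) (c : Perm Z) :
    FixesOrDisplaces (K.map (MulAut.conj c).toMonoidHom) (⇑c '' X) := by
  rintro _ ⟨h, hh, rfl⟩ ⟨_, ⟨_, ⟨x, hx, rfl⟩, rfl⟩, ⟨x', hx', hxx'⟩⟩ _ ⟨y, hy, rfl⟩
  simp only [MulEquiv.coe_toMonoidHom, MulAut.conj_apply, Perm.mul_apply, Perm.coe_inv,
    Equiv.symm_apply_apply, EmbeddingLike.apply_eq_iff_eq] at hxx' ⊢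
  exact hK h hh ⟨h x, ⟨x, hx, rfl⟩, hxx' ▸ hx'⟩ y hy

lemma exists_apply_eq_of_mem_sup {H T : Subgroup (Perm Z)} {B : Set Z}
    (hH : FixesOrDisplaces H B) (hT : Supp T ⊆ B) {x : Z} (hx : x ∈ B) {r : Perm Z}
    (hr : r ∈ T ⊔ H) (hrx : r x ∈ B) : ∃ t ∈ T, r x = t x := by
  -- `O` is invariant under `T ⊔ H` and meets `B` only in the `T`-orbit of `x`.
  set O : Set Z := {z | ∃ h ∈ H, ∃ t ∈ T, h (t x) = z}
  have hO : ∀ g ∈ (T : Set (Perm Z)) ∪ H, Set.MapsTo g O O := by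
    rintro g (hg | hg) _ ⟨h, hh, t, ht, rfl⟩
    · have htx : t x ∈ B := apply_mem_of_Supp_subset hT ht hx
      by_cases hB : h (t x) ∈ B
      · rw [hH h hh ⟨_, ⟨_, htx, rfl⟩, hB⟩ _ htx]
        exact ⟨1, one_mem _, g * t, mul_mem hg ht, rfl⟩
      · rw [apply_eq_of_notMem_Supp hg fun hs => hB (hT hs)]
        exact ⟨h, hh, t, ht, rfl⟩
    · exact ⟨g * h, mul_mem hg hh, t, ht, rfl⟩
  rw [Subgroup.sup_eq_closure] at hr
  have hinv : ∀ g ∈ (T : Set (Perm Z)) ∪ H, g⁻¹ ∈ (T : Set (Perm Z)) ∪ H := by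
    rintro g (hg | hg)
    exacts [Or.inl (inv_mem hg), Or.inr (inv_mem hg)]
  obtain ⟨h, hh, t, ht, hhtx⟩ :=
    mapsTo_of_mem_closure hinv hO hr ⟨1, one_mem _, 1, one_mem _, rfl⟩
  simp only [Perm.one_apply] at hhtx
  have htx : t x ∈ B := apply_mem_of_Supp_subset hT ht hx
  refine ⟨t, ht, ?_⟩
  rw [← hhtx, hH h hh ⟨_, ⟨_, htx, rfl⟩, hhtx ▸ hrx⟩ _ htx]

end FixesOrDisplaces

lemma exists_mem_biSup_Icc_of_mem_closure {G : Type*} [Group G] (K : ℤ → Subgroup G) {m : ℤ}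
    {r : G} (hr : r ∈ Subgroup.closure (⋃ i ∈ {i : ℤ | m ≤ i}, (K i : Set G))) (n₀ : ℤ) :
    ∃ n, n₀ ≤ n ∧ r ∈ ⨆ i ∈ Set.Icc m n, K i := by
  have hmono : Monotone fun n => ⨆ i ∈ Set.Icc m n, K i :=
    fun a b hab => biSup_mono fun i hi => ⟨hi.1, hi.2.trans hab⟩
  have hle : Subgroup.closure (⋃ i ∈ {i : ℤ | m ≤ i}, (K i : Set G)) ≤
      ⨆ n, ⨆ i ∈ Set.Icc m n, K i := by
    rw [Subgroup.closure_le]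
    exact Set.iUnion₂_subset fun i hi _ hx =>
      Subgroup.mem_iSup_of_mem i (le_biSup K (Set.right_mem_Icc.2 hi) hx)
  obtain ⟨n, hn⟩ := (Subgroup.mem_iSup_of_directed hmono.directed_le).1 (hle hr)
  exact ⟨max n n₀, le_max_right _ _, hmono (le_max_left _ _) hn⟩

lemma biSup_Icc_add_one_le {G : Type*} [Group G] (K : ℤ → Subgroup G) (m n : ℤ) :
    ⨆ i ∈ Set.Icc m (n + 1), K i ≤ (⨆ i ∈ Set.Icc m n, K i) ⊔ K (n + 1) := by
  refine iSup₂_le fun i hi => ?_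
  rcases hi.2.lt_or_eq with hin | rfl
  · exact le_sup_of_le_left (le_biSup K ⟨hi.1, Int.lt_add_one_iff.1 hin⟩)
  · exact le_sup_right

theorem apply_notMem_of_mem_closure {Z : Type*} {K : ℤ → Subgroup (Perm Z)} {Y : ℤ → Set Z}
    (hY : Monotone Y) (hKY : ∀ i, Supp (K i) ⊆ Y i)
    (hK : ∀ i, FixesOrDisplaces (K (i + 1)) (Y i)) {k : ℤ} {W S : Set Z} (hWY : W ⊆ Y k)
    (hSY : S ⊆ Y k) (hKS : ∀ i ≤ k, Supp (K i) ⊆ S) (hWS : Disjoint W S) {m : ℤ} {r : Perm Z}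
    (hr : r ∈ Subgroup.closure (⋃ i ∈ {i : ℤ | m ≤ i}, (K i : Set (Perm Z)))) {w : Z}
    (hw : w ∈ W) : r w ∉ S := by
  obtain ⟨n, hkn, hrn⟩ := exists_mem_biSup_Icc_of_mem_closure K hr k
  have hSupp : ∀ {n : ℤ} {A : Set Z}, (∀ i ≤ n, Supp (K i) ⊆ A) →
      Supp (⨆ i ∈ Set.Icc m n, K i) ⊆ A := fun h =>
    Supp_iSup_subset fun i => Supp_iSup_subset fun hi => h i hi.2
  have hwS : w ∉ S := Set.disjoint_left.1 hWS hw
  clear hr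
  induction n, hkn using Int.leInduction generalizing r with
  | base => rwa [apply_eq_of_notMem_Supp hrn fun h => hwS (hSupp hKS h)]
  | succ n hkn ih =>
    by_cases hrw : r w ∈ Y n
    · obtain ⟨t, ht, hrt⟩ := (hK n).exists_apply_eq_of_mem_sup
        (hSupp fun i hi => (hKY i).trans (hY hi)) (hY hkn (hWY hw))
        (biSup_Icc_add_one_le K m n hrn) hrw
      exact hrt ▸ ih ht
    · exact fun hrS => hrw (hY hkn (hSY hrS))

section Conjugates

variable {Z : Type*} (H₁ : Subgroup (Perm Z)) (f : Perm Z)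

lemma image_zpow_sub_one_image (i : ℤ) (A : Set Z) :
    ⇑(f ^ (i - 1)) '' (⇑f '' A) = ⇑(f ^ i) '' A := by
  rw [← Set.image_comp, ← Perm.coe_mul, ← zpow_add_one, sub_add_cancel]

lemma monotone_image_zpow {A : Set Z} (hA : A ⊆ ⇑f '' A) :
    Monotone fun i : ℤ => ⇑(f ^ i) '' A :=
  monotone_int_of_le_succ fun n => by
    rw [← image_zpow_sub_one_image f (n + 1), add_sub_cancel_right]
    exact Set.image_mono hA

lemma Supp_Hseq (i : ℤ) : Supp (Hseq H₁ f i) = ⇑(f ^ (i - 1)) '' Supp H₁ :=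
  Supp_map_conj H₁ _

lemma Supp_Hseq_subset {Y : Set Z} (hY : Supp H₁ ⊆ ⇑f '' Y) (i : ℤ) :
    Supp (Hseq H₁ f i) ⊆ ⇑(f ^ i) '' Y := by
  rw [Supp_Hseq, ← image_zpow_sub_one_image f i Y]
  exact Set.image_mono hY

lemma monotone_Supp_Hseq (hS : Supp H₁ ⊆ ⇑f '' Supp H₁) :
    Monotone fun i => Supp (Hseq H₁ f i) := by
  intro a b hab
  simp only [Supp_Hseq]
  exact monotone_image_zpow f hS (Int.sub_le_sub_right hab 1)

lemma fixesOrDisplaces_Hseq_add_one {Y : Set Z} (hY : FixesOrDisplaces H₁ Y) (i : ℤ) :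
    FixesOrDisplaces (Hseq H₁ f (i + 1)) (⇑(f ^ i) '' Y) := by
  rw [Hseq, add_sub_cancel_right]
  exact hY.map_conj _

lemma disjoint_Wseq_Supp_Hseq {W₀ : Set Z} (hW₀ : Disjoint (⇑f '' W₀) (Supp H₁)) (k : ℤ) :
    Disjoint (Wseq W₀ f k) (Supp (Hseq H₁ f k)) := by
  rw [Wseq, Supp_Hseq, ← image_zpow_sub_one_image,
    Set.disjoint_image_iff (f ^ (k - 1)).injective]
  exact hW₀

lemma Wseq_sub_one_subset_Supp_Hseq {W₀ : Set Z} (hW₀ : W₀ ⊆ Supp H₁) (j : ℤ) :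
    Wseq W₀ f (j - 1) ⊆ Supp (Hseq H₁ f j) := by
  rw [Wseq, Supp_Hseq]
  exact Set.image_mono hW₀

lemma Rseq_antitone : Antitone (Rseq H₁ f) :=
  fun _ _ hab => Subgroup.closure_mono <|
    Set.biUnion_subset_biUnion_left fun _ hi => le_trans hab hi

end Conjugates

namespace InductiveSetting

variable {Z : Type*} {H₁ : Subgroup (Perm Z)} {f : Perm Z} {Y₀ W₀ : Set Z}

lemma apply_notMem_Supp_Hseq (hs : InductiveSetting H₁ f Y₀ W₀) {j k : ℤ} (hjk : j ≤ k)
    {m : ℤ} {r : Perm Z} (hr : r ∈ Rseq H₁ f m) {w : Z} (hw : w ∈ Wseq W₀ f k) :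
    r w ∉ Supp (Hseq H₁ f j) := by
  obtain ⟨⟨-, -, -, -, hY₀, -⟩, hY₀S, hSY₁, -, -, hW₀Y₀, hW₀S⟩ := hs
  have hSupp := monotone_Supp_Hseq H₁ f fun _ hz => Set.image_mono hY₀S (hSY₁ hz)
  refine fun hrw => apply_notMem_of_mem_closure (K := Hseq H₁ f)
    (monotone_image_zpow f fun _ hz => hSY₁ (hY₀S hz)) (Supp_Hseq_subset H₁ f hSY₁)
    (fixesOrDisplaces_Hseq_add_one H₁ f hY₀) (Set.image_mono hW₀Y₀)
    (Supp_Hseq_subset H₁ f hSY₁ k) (fun _ hi => hSupp hi)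
    (disjoint_Wseq_Supp_Hseq H₁ f (Set.disjoint_iff_inter_eq_empty.2 hW₀S) k) hr hw
    (hSupp hjk hrw)

lemma disjoint_iUnion_Rseq_of_lt (hs : InductiveSetting H₁ f Y₀ W₀) {j k : ℤ} (hjk : j < k) :
    Disjoint (⋃ r ∈ Rseq H₁ f j, ⇑r '' Wseq W₀ f (j - 1))
      (⋃ r ∈ Rseq H₁ f k, ⇑r '' Wseq W₀ f (k - 1)) := by
  refine Set.disjoint_left.2 ?_
  simp only [Set.mem_iUnion, Set.mem_image, exists_prop]
  rintro _ ⟨r, hr, w, hw, rfl⟩ ⟨r', hr', w', hw', hrw⟩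
  refine hs.apply_notMem_Supp_Hseq (Int.le_sub_one_of_lt hjk)
    (mul_mem (inv_mem hr) (Rseq_antitone H₁ f hjk.le hr')) hw' ?_
  obtain ⟨-, hY₀S, -, -, -, hW₀Y₀, -⟩ := hs
  rw [Perm.mul_apply, hrw, Perm.coe_inv, Equiv.symm_apply_apply]
  exact Wseq_sub_one_subset_Supp_Hseq H₁ f (hW₀Y₀.trans hY₀S) j hw

end InductiveSetting

/-- In the inductive setting, for `j ≠ k` the union of the sets of the
family `W_{j-1}R_j` is disjoint from the union of the sets of the family `W_{k-1}R_k`;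
moreover for `j < k` every set `W_{k-1}r` (`r ∈ R_k`) is disjoint from `Supp(H_j)`. -/
theorem stmt12 {Z : Type*} (H₁ : Subgroup (Equiv.Perm Z)) (f : Equiv.Perm Z)
    (Y₀ W₀ : Set Z) (hsetting : InductiveSetting H₁ f Y₀ W₀) :
    (∀ j k : ℤ, j ≠ k →
      (⋃ r ∈ Rseq H₁ f j, ⇑r '' Wseq W₀ f (j - 1)) ∩
        (⋃ r ∈ Rseq H₁ f k, ⇑r '' Wseq W₀ f (k - 1)) = ∅) ∧
    (∀ j k : ℤ, j < k → ∀ r ∈ Rseq H₁ f k,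
      (⇑r '' Wseq W₀ f (k - 1)) ∩ Supp (Hseq H₁ f j) = ∅) := by
  refine ⟨fun j k hjk => ?_, fun j k hjk r hr => ?_⟩
  · rw [← Set.disjoint_iff_inter_eq_empty]
    rcases hjk.lt_or_gt with hlt | hgt
    exacts [hsetting.disjoint_iUnion_Rseq_of_lt hlt, (hsetting.disjoint_iUnion_Rseq_of_lt hgt).symm]
  · rw [← Set.disjoint_iff_inter_eq_empty, Set.disjoint_left]
    rintro _ ⟨w, hw, rfl⟩
    exact hsetting.apply_notMem_Supp_Hseq (Int.le_sub_one_of_lt hjk) hr hw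
end
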